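/- Let F be a nonempty closed convex set of density matrices, and let O be the set of linear maps Λ on Hermitian matrices that are completely positive, trace preserving, and satisfy Λ(σ) ∈ F for all σ ∈ F. For a pure state φ define Rmin(φ)^{-1} = max_{σ∈F}⟨φ,σ⟩, assumed < 1. Then for any density matrix ρ and any Λ ∈ O, ⟨Λ(ρ),φ⟩ ≤ G(ρ; Rmin(φ)), where G(ρ;k) := sup{⟨ρ,W⟩ : 0 ⪯ W ⪯ 𝟙, ⟨W,σ⟩ ≤ 1/k ∀σ∈F}. -/

import Mathlib

open Matrix
open scoped ComplexOrder

/-- Hilbert–Schmidt inner product (real part of Tr(A B)) on matrices. -/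
noncomputable def ip {n : Type*} [Fintype n] (A B : Matrix n n ℂ) : ℝ := ((A * B).trace).re

/-- A density matrix: positive semidefinite with trace one. -/
def IsDensity {n : Type*} [Fintype n] (ρ : Matrix n n ℂ) : Prop := ρ.PosSemidef ∧ ρ.trace = 1

/-- A pure state: a rank-one (trace-one) projection. -/
def IsPure {n : Type*} [Fintype n] (P : Matrix n n ℂ) : Prop := IsDensity P ∧ P * P = P

/-- Generalized robustness, dual form. -/
noncomputable def Rmax {n : Type*} [Fintype n] (F : Set (Matrix n n ℂ)) (ρ : Matrix n n ℂ) : ℝ :=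
  sSup {x : ℝ | ∃ W : Matrix n n ℂ, W.PosSemidef ∧ (∀ σ ∈ F, ip W σ ≤ 1) ∧ x = ip ρ W}

/-- Maximal overlap with the free set. -/
noncomputable def RminInv {n : Type*} [Fintype n] (F : Set (Matrix n n ℂ)) (φ : Matrix n n ℂ) : ℝ :=
  sSup {x : ℝ | ∃ σ ∈ F, x = ip φ σ}

/-- Rmin: reciprocal of maximal overlap with the free set. -/
noncomputable def Rmin {n : Type*} [Fintype n] (F : Set (Matrix n n ℂ)) (φ : Matrix n n ℂ) : ℝ :=
  1 / RminInv F φ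

/-- Choi matrix of a map on d×d matrices (CP ↔ Choi matrix PSD). -/
noncomputable def choi {d : ℕ} (Λ : Matrix (Fin d) (Fin d) ℂ → Matrix (Fin d) (Fin d) ℂ) :
    Matrix (Fin d × Fin d) (Fin d × Fin d) ℂ :=
  Matrix.of fun p q => Λ (Matrix.single p.1 q.1 1) p.2 q.2

/-- A quantum channel: completely positive (PSD Choi matrix) and trace preserving. -/
def IsCPTP {d : ℕ} (Λ : Matrix (Fin d) (Fin d) ℂ →ₗ[ℂ] Matrix (Fin d) (Fin d) ℂ) : Prop :=
  (choi fun X => Λ X).PosSemidef ∧ ∀ X, (Λ X).trace = X.trace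

/-- Fidelity quantity G(ρ;k). -/
noncomputable def Gfid {d : ℕ} (F : Set (Matrix (Fin d) (Fin d) ℂ))
    (ρ : Matrix (Fin d) (Fin d) ℂ) (k : ℝ) : ℝ :=
  sSup {x : ℝ | ∃ W : Matrix (Fin d) (Fin d) ℂ, W.PosSemidef ∧
    ((1 : Matrix (Fin d) (Fin d) ℂ) - W).PosSemidef ∧
    (∀ σ ∈ F, ip W σ ≤ 1 / k) ∧ x = ip ρ W}

/-! The trace-dual `Λ†` of a channel, `tr (Λ X * A) = tr (X * Λ† A)`, is completely positive
and unital, so `W := Λ† φ` satisfies `0 ⪯ W ⪯ 1` (as `0 ⪯ φ ⪯ 1` for a projection `φ`).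
For free `σ`, `⟨W, σ⟩ = ⟨φ, Λ σ⟩ ≤ 1 / r` because `Λ σ` is again free. Hence `W` is feasible
for `G(ρ; r)`, and `⟨Λ ρ, φ⟩ = ⟨ρ, W⟩` is at most the supremum. -/

/-- Over `ℂ` hermiticity comes for free: by polarization, a matrix whose quadratic form is real
is Hermitian. -/
lemma Matrix.posSemidef_of_forall_dotProduct_mulVec_nonneg {n : Type*} [Fintype n]
    {M : Matrix n n ℂ} (h : ∀ x, 0 ≤ star x ⬝ᵥ M *ᵥ x) : M.PosSemidef := by
  classical
  refine .of_dotProduct_mulVec_nonneg ?_ h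
  rw [← isSymmetric_toEuclideanLin_iff, LinearMap.isSymmetric_iff_inner_map_self_real]
  intro v
  have him : (star v.ofLp ⬝ᵥ M *ᵥ v.ofLp).im = 0 := (Complex.nonneg_iff.mp (h v)).2.symm
  simp only [toLpLin_apply, EuclideanSpace.inner_eq_star_dotProduct, Complex.conj_eq_iff_im]
  rw [dotProduct_star, dotProduct_comm]
  simpa using him

lemma Matrix.trace_mul_vecMulVec_star {n R : Type*} [Fintype n] [CommSemiring R]
    [StarRing R] (M : Matrix n n R) (v : n → R) :
    (M * vecMulVec v (star v)).trace = star v ⬝ᵥ M *ᵥ v := by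
  rw [mul_vecMulVec, trace_vecMulVec, dotProduct_comm]

lemma Matrix.PosSemidef.trace_mul_nonneg {n : Type*} [Fintype n] {A B : Matrix n n ℂ}
    (hA : A.PosSemidef) (hB : B.PosSemidef) : 0 ≤ (A * B).trace := by
  obtain ⟨k, v, rfl⟩ := posSemidef_iff_eq_sum_vecMulVec.mp hB
  rw [Matrix.mul_sum, trace_sum]
  exact Finset.sum_nonneg fun i _ =>
    trace_mul_vecMulVec_star A (v i) ▸ hA.dotProduct_mulVec_nonneg _

lemma Matrix.IsHermitian.posSemidef_one_sub {n R : Type*} [Fintype n] [DecidableEq n]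
    [CommRing R] [PartialOrder R] [StarRing R] [StarOrderedRing R] {P : Matrix n n R}
    (hP : P.IsHermitian) (hPP : IsIdempotentElem P) : (1 - P).PosSemidef := by
  convert posSemidef_conjTranspose_mul_self (1 - P) using 1
  rw [conjTranspose_sub, conjTranspose_one, hP, sub_mul, mul_sub, mul_sub, hPP.eq]
  simp

section traceDual

variable {R m n : Type*} [CommSemiring R] [Fintype m] [Fintype n] [DecidableEq n]

def traceDual (Λ : Matrix n n R →ₗ[R] Matrix m m R) : Matrix m m R →ₗ[R] Matrix n n R where
  toFun A := of fun i j => (Λ (single j i 1) * A).trace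
  map_add' A B := by ext; simp [Matrix.mul_add]
  map_smul' c A := by ext; simp

lemma trace_map_mul (Λ : Matrix n n R →ₗ[R] Matrix m m R) (X : Matrix n n R)
    (A : Matrix m m R) : (Λ X * A).trace = (X * traceDual Λ A).trace := by
  induction X using Matrix.induction_on' with
  | h_zero => simp
  | h_add X Y hX hY => simp only [map_add, Matrix.add_mul, trace_add, hX, hY]
  | h_std_basis i j c =>
    have hc : single i j c = c • single i j 1 := by rw [smul_single, smul_eq_mul, mul_one]
    rw [hc, map_smul, Matrix.smul_mul, Matrix.smul_mul, trace_smul, trace_smul, trace_single_mul]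
    simp [traceDual]

lemma traceDual_one [DecidableEq m] (Λ : Matrix n n R →ₗ[R] Matrix m m R)
    (hTP : ∀ X, (Λ X).trace = X.trace) : traceDual Λ 1 = 1 := by
  ext i j
  simp only [traceDual, LinearMap.coe_mk, AddHom.coe_mk, of_apply, Matrix.mul_one, hTP]
  rw [← Matrix.mul_one (single j i 1), trace_single_mul, one_smul]

end traceDual

lemma map_eq_sum_smul_map_single {R m n : Type*} [CommSemiring R] [Fintype n]
    [DecidableEq n] (Λ : Matrix n n R →ₗ[R] Matrix m m R) (X : Matrix n n R) :
    Λ X = ∑ i, ∑ j, X i j • Λ (single i j 1) := by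
  conv_lhs => rw [matrix_eq_sum_single X]
  simp only [map_sum, ← map_smul, smul_single, smul_eq_mul, mul_one]

lemma star_dotProduct_map_vecMulVec_mulVec {d : ℕ}
    (Λ : Matrix (Fin d) (Fin d) ℂ →ₗ[ℂ] Matrix (Fin d) (Fin d) ℂ) (u v : Fin d → ℂ) :
    star u ⬝ᵥ Λ (vecMulVec v (star v)) *ᵥ u =
      star (fun p : Fin d × Fin d => star (v p.1) * u p.2) ⬝ᵥ
        choi (fun X => Λ X) *ᵥ fun p => star (v p.1) * u p.2 := by
  rw [map_eq_sum_smul_map_single Λ]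
  simp only [vecMulVec_apply, dotProduct, mulVec, choi, of_apply, Fintype.sum_prod_type,
    Matrix.sum_apply, Matrix.smul_apply, smul_eq_mul, Pi.star_apply, star_mul', star_star,
    Finset.mul_sum, Finset.sum_mul]
  rw [Finset.sum_congr rfl fun a _ => Finset.sum_comm, Finset.sum_comm]
  refine Finset.sum_congr rfl fun i _ => Finset.sum_congr rfl fun a _ => ?_
  rw [Finset.sum_comm]
  refine Finset.sum_congr rfl fun j _ => Finset.sum_congr rfl fun b _ => ?_
  ring

lemma map_vecMulVec_posSemidef {d : ℕ}
    {Λ : Matrix (Fin d) (Fin d) ℂ →ₗ[ℂ] Matrix (Fin d) (Fin d) ℂ}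
    (hC : (choi fun X => Λ X).PosSemidef) (v : Fin d → ℂ) :
    (Λ (vecMulVec v (star v))).PosSemidef :=
  posSemidef_of_forall_dotProduct_mulVec_nonneg fun u =>
    star_dotProduct_map_vecMulVec_mulVec Λ u v ▸ hC.dotProduct_mulVec_nonneg _

lemma traceDual_posSemidef {d : ℕ}
    {Λ : Matrix (Fin d) (Fin d) ℂ →ₗ[ℂ] Matrix (Fin d) (Fin d) ℂ}
    (hC : (choi fun X => Λ X).PosSemidef) {A : Matrix (Fin d) (Fin d) ℂ} (hA : A.PosSemidef) :
    (traceDual Λ A).PosSemidef :=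
  posSemidef_of_forall_dotProduct_mulVec_nonneg fun v => by
    rw [← trace_mul_vecMulVec_star, trace_mul_comm, ← trace_map_mul]
    exact (map_vecMulVec_posSemidef hC v).trace_mul_nonneg hA

section ip

variable {n : Type*} [Fintype n]

lemma ip_comm (A B : Matrix n n ℂ) : ip A B = ip B A := by
  rw [ip, ip, trace_mul_comm]

lemma ip_map {m : Type*} [Fintype m] [DecidableEq n]
    (Λ : Matrix n n ℂ →ₗ[ℂ] Matrix m m ℂ) (X : Matrix n n ℂ) (A : Matrix m m ℂ) :
    ip (Λ X) A = ip X (traceDual Λ A) := by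
  rw [ip, ip, trace_map_mul]

lemma ip_nonneg {A B : Matrix n n ℂ} (hA : A.PosSemidef) (hB : B.PosSemidef) : 0 ≤ ip A B :=
  (Complex.nonneg_iff.mp (hA.trace_mul_nonneg hB)).1

lemma ip_le_one [DecidableEq n] {ρ W : Matrix n n ℂ} (hρ : IsDensity ρ)
    (hW : (1 - W).PosSemidef) : ip ρ W ≤ 1 := by
  have h := ip_nonneg hρ.1 hW
  rw [ip, Matrix.mul_sub, Matrix.mul_one, trace_sub, hρ.2, Complex.sub_re, Complex.one_re] at h
  rw [ip]
  linarith

end ip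

lemma ip_le_Gfid {d : ℕ} {F : Set (Matrix (Fin d) (Fin d) ℂ)}
    {ρ W : Matrix (Fin d) (Fin d) ℂ} {k : ℝ} (hρ : IsDensity ρ) (hW : W.PosSemidef)
    (h1W : (1 - W).PosSemidef) (hWF : ∀ σ ∈ F, ip W σ ≤ 1 / k) : ip ρ W ≤ Gfid F ρ k :=
  le_csSup ⟨1, by rintro _ ⟨W', -, h1W', -, rfl⟩; exact ip_le_one hρ h1W'⟩ ⟨W, hW, h1W, hWF, rfl⟩

theorem stmt9_general {d : ℕ} (F : Set (Matrix (Fin d) (Fin d) ℂ))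
    (φ : Matrix (Fin d) (Fin d) ℂ) (hφ : IsPure φ)
    (r : ℝ) (hfeas : ∀ σ ∈ F, ip φ σ ≤ 1 / r)
    (Λ : Matrix (Fin d) (Fin d) ℂ →ₗ[ℂ] Matrix (Fin d) (Fin d) ℂ)
    (hΛ : IsCPTP Λ) (hΛF : ∀ σ ∈ F, Λ σ ∈ F)
    (ρ : Matrix (Fin d) (Fin d) ℂ) (hρ : IsDensity ρ) :
    ip (Λ ρ) φ ≤ Gfid F ρ r := by
  have hW : (traceDual Λ φ).PosSemidef := traceDual_posSemidef hΛ.1 hφ.1.1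
  have h1W : (1 - traceDual Λ φ).PosSemidef := by
    rw [← traceDual_one Λ hΛ.2, ← map_sub]
    exact traceDual_posSemidef hΛ.1 (hφ.1.1.isHermitian.posSemidef_one_sub hφ.2)
  have hWF : ∀ σ ∈ F, ip (traceDual Λ φ) σ ≤ 1 / r := fun σ hσ => by
    rw [ip_comm, ← ip_map, ip_comm]
    exact hfeas _ (hΛF σ hσ)
  rw [ip_map]
  exact ip_le_Gfid hρ hW h1W hWF

/-- Upper bound on the achievable fidelity under resource non-generating channels:
⟨Λ(ρ),φ⟩ ≤ G(ρ; Rmin(φ)). -/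
theorem stmt9 {d : ℕ} (F : Set (Matrix (Fin d) (Fin d) ℂ))
    (hne : F.Nonempty) (hcl : IsClosed F) (hconv : Convex ℝ F)
    (hdens : ∀ σ ∈ F, IsDensity σ)
    (φ : Matrix (Fin d) (Fin d) ℂ) (hφ : IsPure φ)
    (r : ℝ) (hr : 1 < r) (hfeas : ∀ σ ∈ F, ip φ σ ≤ 1 / r) (hach : ∃ σ ∈ F, ip φ σ = 1 / r)
    (Λ : Matrix (Fin d) (Fin d) ℂ →ₗ[ℂ] Matrix (Fin d) (Fin d) ℂ)
    (hΛ : IsCPTP Λ) (hΛF : ∀ σ ∈ F, Λ σ ∈ F)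
    (ρ : Matrix (Fin d) (Fin d) ℂ) (hρ : IsDensity ρ) :
    ip (Λ ρ) φ ≤ Gfid F ρ r :=
  stmt9_general F φ hφ r hfeas Λ hΛ hΛF ρ hρ
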